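/- arXiv:2209.03975 — 2 statements merged into one kernel-verified Lean document; each statement's English description precedes it below -/
import Mathlib

section
/- Let m and p be finite types and let {O_a} be an orthonormal basis of the space of m×m complex matrices with respect to ⟨X,Y⟩ = Tr(Xᴴ Y). On the doubled bipartite system indexed by (m × p) × (m × p), one has Σ_a (O_aᴴ ⊗ 𝟙_p) ⊠ (O_a ⊗ 𝟙_p) = S₁, where ⊗ denotes the Kronecker product identifying ℂ^{m×p} ≅ ℂ^m ⊗ ℂ^p, ⊠ denotes the Kronecker product between the two copies of ℂ^{m×p}, and S₁ is the permutation matrix implementing the bijection ((x,u),(y,v)) ↦ ((y,u),(x,v)) of (m×p)×(m×p), i.e., the matrix that swaps the first (m-) tensor factors of the two copies while leaving the second (p-) factors fixed. -/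
open Matrix
open scoped Kronecker

/-! Expanding a matrix `X` in the basis, its coefficients are `tr (O_aᴴ X)`; for `X` the matrix
unit `E_{kl}` this gives `∑_a conj (O_a k l) • O_a = E_{kl}`. Entrywise, the sum of Kronecker
products is `(E_{x'x}) y y'` times the Kronecker deltas of the `p`-indices, which is the
partial swap. -/

/-- The partial swap `S₁` on two copies of the bipartite system `m × p`: the permutation
matrix of the bijection `((x,u),(y,v)) ↦ ((y,u),(x,v))`, which exchanges the `m`-factors
of the two copies and fixes the `p`-factors. -/
def partialSwapMat (m p : Type*) [DecidableEq m] [DecidableEq p] :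
    Matrix ((m × p) × (m × p)) ((m × p) × (m × p)) ℂ :=
  Matrix.of fun r s =>
    if r.1.1 = s.2.1 ∧ r.1.2 = s.1.2 ∧ r.2.1 = s.1.1 ∧ r.2.2 = s.2.2 then 1 else 0

namespace Matrix

theorem trace_conjTranspose_mul_single_one {m R : Type*} [Fintype m] [DecidableEq m]
    [Semiring R] [StarRing R] (A : Matrix m m R) (k l : m) :
    (Aᴴ * single k l 1).trace = star (A k l) := by
  simp [trace_mul_single]

section TraceOrthonormal

variable {m ι R : Type*} [Fintype m] [DecidableEq m] [Fintype ι] [DecidableEq ι]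
  [CommSemiring R] [StarRing R] {O : ι → Matrix m m R}

theorem sum_trace_conjTranspose_mul_smul_eq
    (hOorth : ∀ a a', ((O a)ᴴ * O a').trace = if a = a' then 1 else 0)
    (hOspan : Submodule.span R (Set.range O) = ⊤) (X : Matrix m m R) :
    ∑ a, ((O a)ᴴ * X).trace • O a = X := by
  obtain ⟨c, rfl⟩ :=
    (Submodule.mem_span_range_iff_exists_fun R).mp (hOspan ▸ Submodule.mem_top : X ∈ _)
  have hcoeff : ∀ a, ((O a)ᴴ * ∑ b, c b • O b).trace = c a := fun a => by
    simp [Matrix.mul_sum, trace_sum, hOorth]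
  simp_rw [hcoeff]

theorem sum_star_apply_smul_eq_single
    (hOorth : ∀ a a', ((O a)ᴴ * O a').trace = if a = a' then 1 else 0)
    (hOspan : Submodule.span R (Set.range O) = ⊤) (k l : m) :
    ∑ a, star (O a k l) • O a = single k l 1 := by
  simpa only [trace_conjTranspose_mul_single_one] using
    sum_trace_conjTranspose_mul_smul_eq hOorth hOspan (single k l 1)

end TraceOrthonormal

end Matrix

/-- `Σ_a (O_aᴴ ⊗ 𝟙_p) ⊠ (O_a ⊗ 𝟙_p) = SWAP_A` for an orthonormal basis `{O_a}` of the
operators on subsystem `m` (with respect to the unnormalized trace inner product). -/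
theorem sum_kron_eq_partialSwap {m p : Type*}
    [Fintype m] [DecidableEq m] [Fintype p] [DecidableEq p]
    {ι : Type*} [Fintype ι] [DecidableEq ι]
    (O : ι → Matrix m m ℂ)
    (hOorth : ∀ a a', ((O a)ᴴ * O a').trace = if a = a' then 1 else 0)
    (hOspan : Submodule.span ℂ (Set.range O) = ⊤) :
    ∑ a : ι, ((O a)ᴴ ⊗ₖ (1 : Matrix p p ℂ)) ⊗ₖ ((O a) ⊗ₖ (1 : Matrix p p ℂ)) =
      partialSwapMat m p := by
  ext ⟨⟨x, u⟩, y, v⟩ ⟨⟨x', u'⟩, y', v'⟩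
  have hm : ∑ a, star (O a x' x) * O a y y' = single x' x 1 y y' := by
    simpa [Matrix.sum_apply] using
      congrFun (congrFun (sum_star_apply_smul_eq_single hOorth hOspan x' x) y) y'
  simp only [Matrix.sum_apply, kroneckerMap_apply, conjTranspose_apply, one_apply, partialSwapMat,
    of_apply]
  simp_rw [mul_mul_mul_comm, ← Finset.sum_mul, hm]
  grind [single]
end

section
/- Let H be an n×n complex matrix with Hᴴ = H and H·H = H, and let P_I, P_J, P_K be Hermitian idempotent n×n matrices with P_I·P_J = 0, P_J·P_K = 0, and P_K·P_I = 0. Then the sum of the three cyclic current integrals equals ∫₀^{2π} [ Tr( e^{itH} (P_K H P_I − P_I H P_K) e^{−itH} P_J ) + Tr( e^{itH} (P_J H P_K − P_K H P_J) e^{−itH} P_I ) + Tr( e^{itH} (P_I H P_J − P_J H P_I) e^{−itH} P_K ) ] dt = 12π · Tr( H P_K H P_I H P_J − H P_I H P_K H P_J ). -/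
/-! Since `H` is idempotent, `exp (c • H) = 1 + (exp c - 1) • H`, so each current
`Tr (e^{itH} A e^{-itH} P)` equals `(e^{it} - 1)(e^{-it} - 1) Tr (H A H P)`, that is
`2 (1 - cos t) Tr (H A H P)`: the remaining terms of the expansion vanish because
`A P = P A = 0`, which follows from the orthogonality of the self-adjoint projections.
The three traces `Tr (H A H P)` coincide by cyclicity of the trace, and
`∫₀^{2π} 2 (1 - cos t) dt = 4π`. -/

open Matrix

open scoped Nat in
theorem NormedSpace.exp_smul_of_isIdempotentElem {A : Type*} [Ring A] [Algebra ℂ A]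
    [TopologicalSpace A] [IsTopologicalRing A] [ContinuousSMul ℂ A] [T2Space A]
    {H : A} (hH : IsIdempotentElem H) (c : ℂ) :
    NormedSpace.exp (c • H) = 1 + (Complex.exp c - 1) • H := by
  have hterm : ∀ n : ℕ, (n !⁻¹ : ℂ) • (c • H) ^ n =
      ((n !⁻¹ : ℂ) • c ^ n) • H + if n = 0 then 1 - H else 0 := by
    rintro (_ | n)
    · simp
    · rw [smul_pow, hH.pow_succ_eq, smul_smul, if_neg n.succ_ne_zero, add_zero, smul_eq_mul]
  have hseries :
      HasSum (fun n : ℕ => (n !⁻¹ : ℂ) • (c • H) ^ n) (Complex.exp c • H + (1 - H)) := by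
    simp only [hterm, Complex.exp_eq_exp_ℂ]
    exact ((NormedSpace.exp_series_hasSum_exp' c).smul_const H).add (hasSum_ite_eq 0 _)
  rw [congrFun (NormedSpace.exp_eq_tsum ℂ) (c • H), hseries.tsum_eq]
  module

theorem IsSelfAdjoint.mul_eq_zero_comm {R : Type*} [NonUnitalNonAssocSemiring R] [StarRing R]
    {a b : R} (ha : IsSelfAdjoint a) (hb : IsSelfAdjoint b) (h : a * b = 0) : b * a = 0 := by
  simpa [ha.star_eq, hb.star_eq] using congrArg star h

theorem integral_two_mul_one_sub_cos :
    ∫ t in (0 : ℝ)..(2 * Real.pi), 2 * (1 - Real.cos t) = 4 * Real.pi := by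
  simp only [intervalIntegral.integral_const_mul,
    intervalIntegral.integral_sub intervalIntegrable_const intervalIntegral.intervalIntegrable_cos,
    intervalIntegral.integral_const, integral_cos,
    Real.sin_two_pi, Real.sin_zero, smul_eq_mul]
  ring

theorem Complex.exp_mul_I_sub_one_mul_exp_neg_mul_I_sub_one (t : ℝ) :
    (Complex.exp (Complex.I * t) - 1) * (Complex.exp (-(Complex.I * t)) - 1)
      = ((2 * (1 - Real.cos t) : ℝ) : ℂ) := by
  have hinv : Complex.exp (Complex.I * t) * Complex.exp (-(Complex.I * t)) = 1 := by
    rw [← Complex.exp_add, add_neg_cancel, Complex.exp_zero]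
  have hcos :
      2 * Complex.cos t = Complex.exp (Complex.I * t) + Complex.exp (-(Complex.I * t)) := by
    rw [Complex.two_cos]
    ring_nf
  push_cast
  linear_combination hinv + hcos

namespace Matrix

section CommRing

variable {n R : Type*} [Fintype n] [CommRing R]

theorem trace_one_add_smul_mul_one_add_smul_mul [DecidableEq n] {H A P : Matrix n n R}
    (hAP : A * P = 0) (hPA : P * A = 0) (a b : R) :
    ((1 + a • H) * A * (1 + b • H) * P).trace = a * b * (H * A * H * P).trace := by
  have hexpand : (1 + a • H) * A * (1 + b • H) * P
      = A * P + a • (H * (A * P)) + b • (A * H * P) + (a * b) • (H * A * H * P) := by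
    simp only [add_mul, mul_add, one_mul, mul_one, Matrix.smul_mul, Matrix.mul_smul, smul_smul,
      mul_assoc]
    module
  have hAHP : (A * H * P).trace = 0 := by rw [trace_mul_cycle, hPA, zero_mul, trace_zero]
  simp [hexpand, hAP, hAHP]

theorem trace_triple_mul_sub_rotate (H X Y Z : Matrix n n R) :
    (H * X * H * Y * H * Z - H * Y * H * X * H * Z).trace
      = (H * Y * H * Z * H * X - H * Z * H * Y * H * X).trace := by
  rw [trace_sub, trace_sub, show H * X * H * Y * H * Z = (H * X) * (H * Y * H * Z) by
      simp only [mul_assoc], trace_mul_comm (H * X),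
    show H * Y * H * X * H * Z = (H * Y * H * X) * (H * Z) by simp only [mul_assoc],
    trace_mul_comm (H * Y * H * X)]
  simp only [mul_assoc]

end CommRing

section Complex

variable {n : Type*} [Fintype n] [DecidableEq n] {H A P : Matrix n n ℂ}

theorem trace_exp_conj_mul (hH : IsIdempotentElem H) (hAP : A * P = 0) (hPA : P * A = 0)
    (t : ℝ) :
    (NormedSpace.exp ((Complex.I * t) • H) * A *
        NormedSpace.exp ((-(Complex.I * t)) • H) * P).trace
      = ((2 * (1 - Real.cos t) : ℝ) : ℂ) * (H * A * H * P).trace := by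
  rw [NormedSpace.exp_smul_of_isIdempotentElem hH, NormedSpace.exp_smul_of_isIdempotentElem hH,
    trace_one_add_smul_mul_one_add_smul_mul hAP hPA,
    Complex.exp_mul_I_sub_one_mul_exp_neg_mul_I_sub_one]

theorem trace_exp_conj_commutator_mul {X Y Z : Matrix n n ℂ} (hH : IsIdempotentElem H)
    (hXZ : X * Z = 0) (hZX : Z * X = 0) (hYZ : Y * Z = 0) (hZY : Z * Y = 0) (t : ℝ) :
    (NormedSpace.exp ((Complex.I * t) • H) * (X * H * Y - Y * H * X) *
        NormedSpace.exp ((-(Complex.I * t)) • H) * Z).trace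
      = ((2 * (1 - Real.cos t) : ℝ) : ℂ) *
          (H * X * H * Y * H * Z - H * Y * H * X * H * Z).trace := by
  rw [trace_exp_conj_mul hH (by simp [sub_mul, mul_assoc, hXZ, hYZ])
    (by simp [mul_sub, ← mul_assoc, hZX, hZY])]
  simp only [mul_sub, sub_mul, mul_assoc]

end Complex

end Matrix

theorem cyclic_currents_chern_general {n : ℕ}
    (H PI PJ PK : Matrix (Fin n) (Fin n) ℂ)
    (hH2 : H * H = H)
    (hPI : PIᴴ = PI)
    (hPJ : PJᴴ = PJ)
    (hPK : PKᴴ = PK)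
    (hIJ : PI * PJ = 0) (hJK : PJ * PK = 0) (hKI : PK * PI = 0) :
    ∫ t in (0 : ℝ)..(2 * Real.pi),
        ((NormedSpace.exp ((Complex.I * (t : ℂ)) • H) *
            (PK * H * PI - PI * H * PK) *
            NormedSpace.exp ((-(Complex.I * (t : ℂ))) • H) * PJ).trace +
          (NormedSpace.exp ((Complex.I * (t : ℂ)) • H) *
            (PJ * H * PK - PK * H * PJ) *
            NormedSpace.exp ((-(Complex.I * (t : ℂ))) • H) * PI).trace +
          (NormedSpace.exp ((Complex.I * (t : ℂ)) • H) *
            (PI * H * PJ - PJ * H * PI) *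
            NormedSpace.exp ((-(Complex.I * (t : ℂ))) • H) * PK).trace) =
      ((12 * Real.pi : ℝ) : ℂ) *
        (H * PK * H * PI * H * PJ - H * PI * H * PK * H * PJ).trace := by
  have hJI := IsSelfAdjoint.mul_eq_zero_comm hPI hPJ hIJ
  have hKJ := IsSelfAdjoint.mul_eq_zero_comm hPJ hPK hJK
  have hIK := IsSelfAdjoint.mul_eq_zero_comm hPK hPI hKI
  set T := (H * PK * H * PI * H * PJ - H * PI * H * PK * H * PJ).trace
  simp only [trace_exp_conj_commutator_mul hH2 hKJ hJK hIJ hJI,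
    trace_exp_conj_commutator_mul hH2 hJI hIJ hKI hIK,
    trace_exp_conj_commutator_mul hH2 hIK hKI hJK hKJ,
    ← trace_triple_mul_sub_rotate H PI PJ PK, ← trace_triple_mul_sub_rotate H PK PI PJ]
  rw [intervalIntegral.integral_congr (g := fun t => ((3 * (2 * (1 - Real.cos t)) : ℝ) : ℂ) * T)
      fun t _ => by push_cast; ring,
    intervalIntegral.integral_mul_const, intervalIntegral.integral_ofReal,
    intervalIntegral.integral_const_mul, integral_two_mul_one_sub_cos]
  push_cast
  ring

/-- For a projector Hamiltonian `H` and mutually orthogonal projections `P_I, P_J, P_K`,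
the sum of the three cyclic time-integrated currents equals
`12π·Tr(H P_K H P_I H P_J − H P_I H P_K H P_J)` (the real-space Chern number formula). -/
theorem cyclic_currents_chern {n : ℕ}
    (H PI PJ PK : Matrix (Fin n) (Fin n) ℂ)
    (hH : Hᴴ = H) (hH2 : H * H = H)
    (hPI : PIᴴ = PI) (hPI2 : PI * PI = PI)
    (hPJ : PJᴴ = PJ) (hPJ2 : PJ * PJ = PJ)
    (hPK : PKᴴ = PK) (hPK2 : PK * PK = PK)
    (hIJ : PI * PJ = 0) (hJK : PJ * PK = 0) (hKI : PK * PI = 0) :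
    ∫ t in (0 : ℝ)..(2 * Real.pi),
        ((NormedSpace.exp ((Complex.I * (t : ℂ)) • H) *
            (PK * H * PI - PI * H * PK) *
            NormedSpace.exp ((-(Complex.I * (t : ℂ))) • H) * PJ).trace +
          (NormedSpace.exp ((Complex.I * (t : ℂ)) • H) *
            (PJ * H * PK - PK * H * PJ) *
            NormedSpace.exp ((-(Complex.I * (t : ℂ))) • H) * PI).trace +
          (NormedSpace.exp ((Complex.I * (t : ℂ)) • H) *
            (PI * H * PJ - PJ * H * PI) *
            NormedSpace.exp ((-(Complex.I * (t : ℂ))) • H) * PK).trace) =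
      ((12 * Real.pi : ℝ) : ℂ) *
        (H * PK * H * PI * H * PJ - H * PI * H * PK * H * PJ).trace :=
  cyclic_currents_chern_general H PI PJ PK hH2 hPI hPJ hPK hIJ hJK hKI
end
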